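/- arXiv:0802.0883 — 8 statements merged into one kernel-verified Lean document; each statement's English description precedes it below -/
import Mathlib

section
/- Every residually free group generated by two elements is isomorphic to one of: the trivial group, the infinite cyclic group Z, the free abelian group Z^2, or the free group F2 of rank 2. -/
/-!
The abelian case is linear algebra: a residually free group embeds in a product of copies of
`F₂`, hence is torsion-free, and a torsion-free abelian group generated by two elements is free
abelian of rank at most two.

Otherwise `⁅a, b⁆ ≠ 1`, so some `f : G →* F₂` sends `a` and `b` to non-commuting elements
`x, y`. By Nielsen–Schreier, `⟨x, y⟩` is free; its rank is at most two (count homomorphisms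
to `ℤ/2`) and at least two (it is not abelian), so the map `F₂ → ⟨x, y⟩` sending the basis to
`x, y` is a surjection between free groups of rank two. Since `F₂` embeds in `SL(2, ℤ)` by
ping-pong, it is residually finite and therefore Hopfian, so this surjection is injective. Hence
the surjection `F₂ → G` sending the basis to `a, b` is injective as well.
-/

open Matrix
open scoped MatrixGroups commutatorElement

def SubMulAction.nonzero (G M : Type*) [Group G] [AddMonoid M] [DistribMulAction G M] :
    SubMulAction G M where
  carrier := {x | x ≠ 0}
  smul_mem' g _ hx := (smul_ne_zero_iff_ne g).mpr hx

@[simp]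
lemma SubMulAction.mem_nonzero {G M : Type*} [Group G] [AddMonoid M] [DistribMulAction G M]
    {x : M} : x ∈ SubMulAction.nonzero G M ↔ x ≠ 0 :=
  Iff.rfl

namespace Matrix.SpecialLinearGroup

section transvection

variable {ι F : Type*} [DecidableEq ι] [Fintype ι] [CommRing F]

lemma transvection_smul_apply_self {i j : ι} (hij : i ≠ j) (c : F) (v : ι → F) :
    (transvection hij c • v) i = v i + c * v j := by
  change ((transvection hij c : Matrix ι ι F) *ᵥ v) i = _
  simp [transvection_coe, add_mulVec, single_mulVec]

lemma transvection_smul_apply_of_ne {i j k : ι} (hij : i ≠ j) (c : F) (v : ι → F)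
    (hk : k ≠ i) : (transvection hij c • v) k = v k := by
  change ((transvection hij c : Matrix ι ι F) *ᵥ v) k = _
  simp [transvection_coe, add_mulVec, single_mulVec, hk]

end transvection

lemma exists_map_zmod_ne_one {n : Type*} [DecidableEq n] [Fintype n]
    {M : SpecialLinearGroup n ℤ} (hM : M ≠ 1) :
    ∃ N : ℕ, map (Int.castRingHom (ZMod (N + 1))) M ≠ 1 := by
  obtain ⟨i, j, hij⟩ : ∃ i j, M i j ≠ (1 : Matrix n n ℤ) i j := by
    by_contra! h
    exact hM (Subtype.ext (Matrix.ext h))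
  set d := M i j - (1 : Matrix n n ℤ) i j
  refine ⟨d.natAbs, fun h => sub_ne_zero.2 hij
    (Int.eq_zero_of_abs_lt_dvd (m := ((d.natAbs + 1 : ℕ) : ℤ)) ?_ ?_)⟩
  · have : ((M i j : ℤ) : ZMod (d.natAbs + 1)) = (1 : Matrix n n (ZMod (d.natAbs + 1))) i j := by
      rw [← coe_one, ← h]
      rfl
    rw [← ZMod.intCast_zmod_eq_zero_iff_dvd, Int.cast_sub, this, one_apply, one_apply]
    split_ifs <;> simp
  · rw [Int.abs_eq_natAbs]
    omega

section PingPong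

private lemma self_ne_add_one (i : Fin 2) : i ≠ i + 1 := by
  fin_cases i <;> decide

private lemma add_one_add_one (i : Fin 2) : i + 1 + 1 = i := by
  fin_cases i <;> decide

private lemma eq_add_one_of_ne {i j : Fin 2} (h : i ≠ j) : j = i + 1 := by
  fin_cases i <;> fin_cases j <;> simp_all

private lemma ne_zero_or_ne_zero_of_ne_zero {R : Type*} [Zero R] {v : Fin 2 → R} (hv : v ≠ 0)
    (i : Fin 2) : v i ≠ 0 ∨ v (i + 1) ≠ 0 := by
  by_contra! h
  refine hv (funext fun k => ?_)
  rcases eq_or_ne i k with rfl | hk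
  · exact h.1
  · rw [eq_add_one_of_ne hk]
    exact h.2

private lemma mul_self_lt_add_three_mul {x y : ℤ} (hxy : x ≠ 0 ∨ y ≠ 0)
    (h : ¬(y * y < x * x ∧ x * y < 0)) :
    y * y < (x + 3 * y) * (x + 3 * y) ∧ 0 ≤ (x + 3 * y) * y := by
  rcases eq_or_ne y 0 with rfl | hy
  · simp_all
  have hy2 : 0 < y * y := mul_self_pos.2 hy
  rw [not_and_or, not_lt, not_lt] at h
  rcases h with h | h <;> constructor <;> nlinarith [sq_nonneg (x + y), sq_nonneg (x - y)]

private lemma mul_self_lt_add_neg_three_mul {x y : ℤ} (hxy : x ≠ 0 ∨ y ≠ 0)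
    (h : ¬(y * y < x * x ∧ 0 ≤ x * y)) :
    y * y < (x + -3 * y) * (x + -3 * y) ∧ (x + -3 * y) * y < 0 := by
  rcases eq_or_ne y 0 with rfl | hy
  · simp_all
  have hy2 : 0 < y * y := mul_self_pos.2 hy
  rw [not_and_or, not_lt, not_le] at h
  rcases h with h | h <;> constructor <;> nlinarith [sq_nonneg (x + y), sq_nonneg (x - y)]

/-- `!![1, 3; 0, 1]` and `!![1, 0; 3, 1]`. -/
def pingPongGen (i : Fin 2) : SL(2, ℤ) :=
  transvection (self_ne_add_one i) 3

abbrev NonzeroVec := SubMulAction.nonzero SL(2, ℤ) (Fin 2 → ℤ)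

/- In terms of the slope `v i / v (i + 1)`, these are `(1, ∞]` and `(-∞, -1)`. -/
def pingPongPos (i : Fin 2) : Set NonzeroVec :=
  {v | v.1 (i + 1) * v.1 (i + 1) < v.1 i * v.1 i ∧ 0 ≤ v.1 i * v.1 (i + 1)}

def pingPongNeg (i : Fin 2) : Set NonzeroVec :=
  {v | v.1 (i + 1) * v.1 (i + 1) < v.1 i * v.1 i ∧ v.1 i * v.1 (i + 1) < 0}

lemma transvection_smul_nonzeroVec (i : Fin 2) (c : ℤ) (v : NonzeroVec) :
    (transvection (self_ne_add_one i) c • v).1 i = v.1 i + c * v.1 (i + 1) ∧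
      (transvection (self_ne_add_one i) c • v).1 (i + 1) = v.1 (i + 1) := by
  rw [SubMulAction.val_smul]
  exact ⟨transvection_smul_apply_self _ c _,
    transvection_smul_apply_of_ne _ c _ (self_ne_add_one i).symm⟩

theorem injective_lift_pingPongGen : Function.Injective (FreeGroup.lift pingPongGen) := by
  apply FreeGroup.injective_lift_of_ping_pong pingPongGen pingPongPos pingPongNeg
  · intro i
    refine ⟨⟨Pi.single i 1, by simp⟩, ?_⟩
    simp [pingPongPos, (self_ne_add_one i).symm]
  · intro i j hij
    rw [eq_add_one_of_ne hij]
    refine Set.disjoint_left.2 fun v h₁ h₂ => ?_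
    simp only [pingPongPos, Set.mem_ofPred_eq, add_one_add_one] at h₁ h₂
    linarith [h₁.1, h₂.1]
  · intro i j hij
    rw [eq_add_one_of_ne hij]
    refine Set.disjoint_left.2 fun v h₁ h₂ => ?_
    simp only [pingPongNeg, Set.mem_ofPred_eq, add_one_add_one] at h₁ h₂
    linarith [h₁.1, h₂.1]
  · intro i j
    refine Set.disjoint_left.2 fun v h₁ h₂ => ?_
    rcases eq_or_ne i j with rfl | hij
    · exact absurd h₁.2 (not_le.2 h₂.2)
    · rw [eq_add_one_of_ne hij] at h₂
      simp only [pingPongNeg, Set.mem_ofPred_eq, add_one_add_one] at h₂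
      linarith [h₁.1, h₂.1]
  · rintro i _ ⟨v, hv, rfl⟩
    obtain ⟨h₁, h₂⟩ := transvection_smul_nonzeroVec i 3 v
    simp only [pingPongGen, pingPongPos, Set.mem_ofPred_eq, h₁, h₂]
    exact mul_self_lt_add_three_mul (ne_zero_or_ne_zero_of_ne_zero v.2 i) hv
  · rintro i _ ⟨v, hv, rfl⟩
    obtain ⟨h₁, h₂⟩ := transvection_smul_nonzeroVec i (-3) v
    simp only [Pi.inv_apply, pingPongGen, transvection_inv, pingPongNeg, Set.mem_ofPred_eq, h₁,
      h₂]
    exact mul_self_lt_add_neg_three_mul (ne_zero_or_ne_zero_of_ne_zero v.2 i) hv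

end PingPong

end Matrix.SpecialLinearGroup

open Matrix.SpecialLinearGroup in
theorem FreeGroup.exists_map_zmod_ne_one {w : FreeGroup (Fin 2)} (hw : w ≠ 1) :
    ∃ (N : ℕ) (ψ : FreeGroup (Fin 2) →* SL(2, ZMod (N + 1))), ψ w ≠ 1 := by
  have hι : lift pingPongGen w ≠ 1 := fun h =>
    hw ((injective_iff_map_eq_one _).1 injective_lift_pingPongGen w h)
  obtain ⟨N, hN⟩ := Matrix.SpecialLinearGroup.exists_map_zmod_ne_one hι
  exact ⟨N, (Matrix.SpecialLinearGroup.map _).comp (lift pingPongGen), hN⟩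

theorem MonoidHom.map_eq_one_of_surjective_of_map_eq_one {G Q : Type*} [Group G] [Group Q]
    [Finite (G →* Q)] {φ : Monoid.End G} (hφ : Function.Surjective φ) (ψ : G →* Q) {g : G}
    (hg : φ g = 1) : ψ g = 1 := by
  -- Finitely many `ψ ∘ φ ^ k` exist, and equality of two of them makes `ψ` `φ`-periodic.
  obtain ⟨k, l, hkl, hψ⟩ := Finite.exists_ne_map_eq_of_infinite fun k : ℕ => ψ.comp (φ ^ k)
  wlog hlt : k < l generalizing k l
  · exact this l k hkl.symm hψ.symm (by omega)
  obtain ⟨m, rfl⟩ := Nat.exists_eq_add_of_lt hlt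
  have hperiodic : ∀ x, ψ x = ψ (φ^[m + 1] x) := by
    intro x
    obtain ⟨y, rfl⟩ := hφ.iterate k x
    have : ψ ((φ ^ k) y) = ψ ((φ ^ (k + m + 1)) y) := DFunLike.congr_fun hψ y
    simp only [Monoid.End.coe_pow] at this
    rw [this, ← Function.iterate_add_apply, add_comm (m + 1), add_assoc]
  rw [hperiodic, Function.iterate_succ_apply, hg, iterate_map_one, map_one]

namespace FreeGroup

instance {α Q : Type*} [Finite α] [Group Q] [Finite Q] : Finite (FreeGroup α →* Q) :=
  Finite.of_equiv _ FreeGroup.lift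

theorem injective_of_surjective_fin_two {φ : FreeGroup (Fin 2) →* FreeGroup (Fin 2)}
    (hφ : Function.Surjective φ) : Function.Injective φ := by
  refine (injective_iff_map_eq_one φ).2 fun g hg => ?_
  by_contra hg1
  obtain ⟨N, ψ, hψ⟩ := exists_map_zmod_ne_one hg1
  exact hψ (MonoidHom.map_eq_one_of_surjective_of_map_eq_one (φ := φ) hφ ψ hg)

theorem finite_and_card_le_of_surjective {α β : Type*} [Finite α]
    {f : FreeGroup α →* FreeGroup β} (hf : Function.Surjective f) :
    Finite β ∧ Nat.card β ≤ Nat.card α := by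
  -- Homomorphisms to `ℤ/2` pull back injectively along `f`.
  let M := Multiplicative (ZMod 2)
  have hinj : Function.Injective fun c : β → M => lift.symm ((lift c).comp f) := by
    intro c c' h
    simpa [MonoidHom.cancel_right hf] using h
  have : Finite (β → M) := Finite.of_injective _ hinj
  have : Finite β := by
    by_contra h
    rw [not_finite_iff_infinite] at h
    exact not_finite (β → M)
  refine ⟨this, ?_⟩
  have := Nat.card_le_card_of_injective _ hinj
  rwa [Nat.card_fun, Nat.card_fun, Nat.pow_le_pow_iff_right (by simp [M])] at this

theorem commute_of_subsingleton {β : Type*} [Subsingleton β] (x y : FreeGroup β) :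
    Commute x y := by
  cases isEmpty_or_nonempty β
  · exact Subsingleton.elim _ _
  · have := uniqueOfSubsingleton (Classical.arbitrary β)
    exact IsCyclic.commGroup.mul_comm x y

theorem injective_lift_of_not_commute {α : Type*} {x y : FreeGroup α} (hxy : ¬Commute x y) :
    Function.Injective (lift ![x, y]) := by
  set q := lift ![x, y]
  let e := IsFreeGroup.toFreeGroup q.range
  let s : FreeGroup (Fin 2) →* FreeGroup (IsFreeGroup.Generators q.range) :=
    e.toMonoidHom.comp q.rangeRestrict
  have hs : Function.Surjective s := e.surjective.comp q.rangeRestrict_surjective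
  obtain ⟨_, hcard⟩ := finite_and_card_le_of_surjective hs
  have : Nontrivial (IsFreeGroup.Generators q.range) := by
    rw [← not_subsingleton_iff_nontrivial]
    intro
    have := (commute_of_subsingleton (s (of 0)) (s (of 1))).map e.symm.toMonoidHom
    exact hxy (by simpa [s, q] using this.map q.range.subtype)
  let e₂ := Finite.equivFinOfCardEq (le_antisymm (hcard.trans (by simp)) Finite.one_lt_card)
  have ht : Function.Injective ((freeGroupCongr e₂).toMonoidHom.comp s) :=
    injective_of_surjective_fin_two ((freeGroupCongr e₂).surjective.comp hs)
  rw [MonoidHom.coe_comp] at ht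
  exact q.rangeRestrict_injective_iff.1 ((e.injective.of_comp_iff _).1 ht.of_comp)

theorem lift_bijective_of_not_commute {G α : Type*} [Group G] {a b : G}
    (hgen : Subgroup.closure {a, b} = ⊤) (f : G →* FreeGroup α) (hf : ¬Commute (f a) (f b)) :
    Function.Bijective (lift ![a, b]) := by
  have hcomp : f.comp (lift ![a, b]) = lift ![f a, f b] := by
    ext i
    fin_cases i <;> simp
  refine ⟨Function.Injective.of_comp (f := f) ?_, ?_⟩
  · rw [← MonoidHom.coe_comp, hcomp]
    exact injective_lift_of_not_commute hf
  · rwa [lift_surjective_iff_closure_range_eq_top, range_cons_cons_empty]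

end FreeGroup

theorem Subgroup.mul_comm_of_closure_eq_top {G : Type*} [Group G] {s : Set G}
    (hs : Subgroup.closure s = ⊤) (hcomm : s.Pairwise Commute) (g h : G) : g * h = h * g := by
  have := Subgroup.isMulCommutative_closure fun x hx y hy =>
    (eq_or_ne x y).elim (fun hxy => hxy ▸ rfl) (hcomm hx hy)
  have hmem : ∀ x : G, x ∈ Subgroup.closure s := fun x => hs ▸ Subgroup.mem_top x
  exact congrArg Subtype.val (this.is_comm.comm ⟨g, hmem g⟩ ⟨h, hmem h⟩)

theorem IsMulTorsionFree.of_forall_exists_map_ne_one {G H : Type*} [Group G] [Group H]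
    [IsMulTorsionFree H] (h : ∀ g : G, g ≠ 1 → ∃ f : G →* H, f g ≠ 1) : IsMulTorsionFree G where
  pow_left_injective n hn x y hxy := by
    by_contra hne
    obtain ⟨f, hf⟩ := h (x * y⁻¹) (mul_inv_eq_one.not.2 hne)
    have : f x ^ n = f y ^ n := by simpa only [map_pow] using congrArg f hxy
    exact hf (by
      rw [map_mul, map_inv, IsMulTorsionFree.pow_left_injective hn this, mul_inv_cancel])

theorem CommGroup.exists_mulEquiv_of_closure_range_eq_top {G : Type*} [CommGroup G]
    [IsMulTorsionFree G] {k : ℕ} (v : Fin k → G) (hv : Subgroup.closure (Set.range v) = ⊤) :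
    ∃ r ≤ k, Nonempty (G ≃* Multiplicative (Fin r → ℤ)) := by
  have hspan : Submodule.span ℤ (Set.range (Additive.ofMul ∘ v)) = ⊤ := by
    have := Subgroup.toAddSubgroup_closure (Set.range v)
    rw [hv, OrderIso.map_top] at this
    rw [← Submodule.toAddSubgroup_inj, Submodule.span_int_eq_addSubgroupClosure, Set.range_comp,
      Equiv.image_eq_preimage_symm]
    exact this.symm
  have : Module.Finite ℤ (Additive G) := ⟨Submodule.fg_def.2 ⟨_, Set.finite_range _, hspan⟩⟩
  exact ⟨_, (finrank_le_of_span_eq_top hspan).trans_eq (Fintype.card_fin k),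
    ⟨AddEquiv.toMultiplicativeRight
      (Module.finBasisOfFinrankEq ℤ (Additive G) rfl).equivFun.toAddEquiv⟩⟩

/-- Every residually free group generated by two elements is isomorphic to one of:
the trivial group, `ℤ`, `ℤ²`, or the free group of rank 2. -/
theorem two_generator_residually_free_classification (G : Type*) [Group G]
    (hRF : ∀ g : G, g ≠ 1 → ∃ f : G →* FreeGroup (Fin 2), f g ≠ 1)
    (a b : G) (hgen : Subgroup.closure {a, b} = ⊤) :
    Nonempty (G ≃* PUnit) ∨ Nonempty (G ≃* Multiplicative ℤ) ∨
      Nonempty (G ≃* Multiplicative (ℤ × ℤ)) ∨ Nonempty (G ≃* FreeGroup (Fin 2)) := by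
  by_cases hab : Commute a b
  · have hcomm : ∀ g h : G, g * h = h * g :=
      Subgroup.mul_comm_of_closure_eq_top hgen (Set.pairwise_pair.2 fun _ => ⟨hab, hab.symm⟩)
    let : CommGroup G := { mul_comm := hcomm }
    have : IsMulTorsionFree G := .of_forall_exists_map_ne_one hRF
    obtain ⟨r, hr, ⟨e⟩⟩ := CommGroup.exists_mulEquiv_of_closure_range_eq_top ![a, b]
      (by rwa [Matrix.range_cons_cons_empty])
    interval_cases r
    · exact Or.inl ⟨e.trans MulEquiv.ofUnique⟩
    · exact Or.inr <| Or.inl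
        ⟨e.trans (LinearEquiv.funUnique (Fin 1) ℤ ℤ).toAddEquiv.toMultiplicative⟩
    · exact Or.inr <| Or.inr <| Or.inl
        ⟨e.trans (LinearEquiv.piFinTwo ℤ fun _ => ℤ).toAddEquiv.toMultiplicative⟩
  · obtain ⟨f, hf⟩ := hRF ⁅a, b⁆ (mt commutatorElement_eq_one_iff_commute.1 hab)
    rw [map_commutatorElement, Ne, commutatorElement_eq_one_iff_commute] at hf
    exact Or.inr <| Or.inr <| Or.inr
      ⟨(MulEquiv.ofBijective _ (FreeGroup.lift_bijective_of_not_commute hgen f hf)).symm⟩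
end

section
/- If G is a residually free group and a, b are elements of G such that the subgroup generated by a and b is non-abelian, then a and b generate a free group of rank 2. -/
/-!
A homomorphism `f` to `F₂` that does not kill `⁅a, b⁆` sends `a, b` to non-commuting elements.
They generate a subgroup `K` of `F₂`, which is free by Nielsen–Schreier; its abelianization is a
quotient of `ℤ²`, so its rank is at most 2, and it is at least 2 because `K` is not abelian.
Hence `F₂ → ⟨a, b⟩ → K ≅ F₂` is a surjective endomorphism of `F₂`, which is injective
because finitely generated residually finite groups are Hopfian (Mal'cev). Free groups are
residually finite: a reduced word `L` of length `n` acts nontrivially on `Fin (n + 1)` once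
each letter `L[k]` is made to move `k + 1` to `k`.
-/

open Function Equiv
open scoped commutatorElement

theorem List.prod_apply_of_forall_getElem_apply {β : Type*} (l : List (Equiv.Perm β))
    (p : ℕ → β) (h : ∀ k (hk : k < l.length), l[k] (p (k + 1)) = p k) :
    l.prod (p l.length) = p 0 := by
  induction l generalizing p with
  | nil => rfl
  | cons σ l ih =>
    rw [List.prod_cons, Perm.mul_apply, List.length_cons,
      ih (fun k => p (k + 1)) fun k hk => h (k + 1) (by simpa using hk)]
    exact h 0 (by simp)

namespace FreeGroup

variable {α : Type*}

theorem IsReduced.snd_eq_of_fst_eq {L : List (α × Bool)} (hL : IsReduced L) {k k' : Fin L.length}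
    (hk : (k' : ℕ) = k + 1) (h : L[k].1 = L[k'].1) : L[k].2 = L[k'].2 := by
  obtain ⟨k', hk'⟩ := k'
  obtain rfl : k' = k + 1 := hk
  exact List.isChain_iff_getElem.mp hL k _ h

theorem exists_perm_of_isReduced {L : List (α × Bool)} (hL : IsReduced L) (i : α) :
    ∃ σ : Perm (Fin (L.length + 1)),
      ∀ k : Fin L.length, L[k].1 = i → (cond L[k].2 σ σ⁻¹) k.succ = k.castSucc := by
  let K := {k : Fin L.length // L[k].1 = i}
  have adjacent {k k' : K} (h : (k'.1 : ℕ) = k.1 + 1) : L[k.1].2 = L[k'.1].2 :=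
    hL.snd_eq_of_fst_eq h (k.2.trans k'.2.symm)
  have inj (b : Bool) : Injective fun k : K => if L[k.1].2 = b then k.1.succ else k.1.castSucc := by
    -- distinct letters `i^±1` can only share an endpoint if they are adjacent and cancel
    intro k k' hkk'
    have h₁ := @adjacent k k'
    have h₂ := @adjacent k' k
    apply Subtype.ext; apply Fin.ext
    simp only [Fin.ext_iff] at hkk'
    split_ifs at hkk' <;> simp only [Fin.val_succ, Fin.val_castSucc] at hkk' <;> grind
  obtain ⟨σ, hσ⟩ := Perm.exists_extending_pair _ _ (inj true) (inj false)
  refine ⟨σ, fun k hk => ?_⟩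
  have := hσ ⟨k, hk⟩
  simp only [Fin.getElem_fin] at this ⊢
  cases hb : L[(k : ℕ)].2 <;> simp_all [Equiv.symm_apply_eq]

theorem exists_perm_lift_mk_ne_one {L : List (α × Bool)} (hL : IsReduced L) (hne : L ≠ []) :
    ∃ (n : ℕ) (σ : α → Perm (Fin n)), lift σ (mk L) ≠ 1 := by
  choose σ hσ using exists_perm_of_isReduced hL
  refine ⟨L.length + 1, σ, fun h => ?_⟩
  have key := List.prod_apply_of_forall_getElem_apply
    (L.map fun x => cond x.2 (σ x.1) (σ x.1)⁻¹) (Fin.ofNat (L.length + 1)) fun k hk => by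
      simp only [List.length_map] at hk
      convert hσ _ ⟨k, hk⟩ rfl using 2 <;> simp [Fin.ext_iff, Nat.mod_eq_of_lt, hk, hk.le]
  rw [← lift_mk, h] at key
  simp [Fin.ext_iff, Nat.mod_eq_of_lt, hne] at key

instance : Group.ResiduallyFinite (FreeGroup α) := by
  classical
  refine Group.residuallyFinite_of_forall_exists_finite_monoidHom fun w hw => ?_
  obtain ⟨n, σ, hσ⟩ := exists_perm_lift_mk_ne_one (isReduced_toWord (x := w))
    (toWord_eq_nil_iff.not.mpr hw)
  exact ⟨Perm (Fin n), _, inferInstance, lift σ, by rwa [mk_toWord] at hσ⟩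

end FreeGroup

universe u v

open Cardinal

instance MonoidHom.finite_of_fg {G F : Type*} [Group G] [Group.FG G] [Group F] [Finite F] :
    Finite (G →* F) := by
  obtain ⟨S, hS, hfin⟩ := Group.fg_iff.mp ‹_›
  have := hfin.to_subtype
  exact Finite.of_injective (fun φ : G →* F => fun s : S => φ s) fun φ ψ h =>
    MonoidHom.eq_of_eqOn_dense hS fun s hs => congrFun h ⟨s, hs⟩

theorem Group.ResiduallyFinite.injective_of_surjective {G : Type*} [Group G] [Group.FG G]
    [Group.ResiduallyFinite G] {φ : G →* G} (hφ : Surjective φ) : Injective φ := by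
  refine (injective_iff_map_eq_one φ).mpr fun g hg => ?_
  by_contra hne
  obtain ⟨N, hgN⟩ := Group.exists_finiteIndexNormalSubgroup_notMem g hne
  let q := QuotientGroup.mk' N.toSubgroup
  have hsurj : Surjective fun ψ : G →* G ⧸ N.toSubgroup => ψ.comp φ :=
    Finite.injective_iff_surjective.mp fun ψ₁ ψ₂ => (MonoidHom.cancel_right hφ).mp
  obtain ⟨ψ, hψ⟩ := hsurj q
  have : q g = 1 := by rw [← hψ, MonoidHom.comp_apply, hg, map_one]
  exact hgN ((QuotientGroup.eq_one_iff g).mp this)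

theorem FreeGroup.rank_le_of_surjective {α : Type u} {β : Type v}
    {φ : FreeGroup α →* FreeGroup β} (hφ : Surjective φ) :
    Cardinal.lift.{u} #β ≤ Cardinal.lift.{v} #α := by
  let ψ : FreeAbelianGroup α →ₗ[ℤ] FreeAbelianGroup β :=
    (Abelianization.map φ).toAdditive.toIntLinearMap
  have hψ : Surjective ψ := by
    intro z
    induction z using QuotientGroup.induction_on with
    | H x =>
      obtain ⟨y, rfl⟩ := hφ x
      exact ⟨Additive.ofMul (Abelianization.of y), Abelianization.map_of φ y⟩
  simpa [← (FreeAbelianGroup.basis α).mk_eq_rank'', ← (FreeAbelianGroup.basis β).mk_eq_rank'']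
    using ψ.lift_rank_le_of_surjective hψ

theorem FreeGroup.mul_comm_of_subsingleton {α : Type*} [Subsingleton α] (x y : FreeGroup α) :
    x * y = y * x := by
  rcases isEmpty_or_nonempty α with hα | hα
  · exact Subsingleton.elim _ _
  · have := uniqueOfSubsingleton (Classical.arbitrary α)
    exact IsCyclic.commGroup.mul_comm x y

theorem IsFreeGroup.nonempty_mulEquiv_freeGroup_fin_two {H : Type*} [Group H] [IsFreeGroup H]
    {φ : FreeGroup (Fin 2) →* H} (hφ : Surjective φ) {x y : H} (hxy : x * y ≠ y * x) :
    Nonempty (H ≃* FreeGroup (Fin 2)) := by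
  let e := IsFreeGroup.toFreeGroup H
  have hle := FreeGroup.rank_le_of_surjective (φ := e.toMonoidHom.comp φ) (e.surjective.comp hφ)
  have hge : 2 ≤ #(IsFreeGroup.Generators H) := by
    rw [two_le_iff]
    by_contra! h
    have : Subsingleton (IsFreeGroup.Generators H) := ⟨h⟩
    exact hxy (e.injective (by simp [FreeGroup.mul_comm_of_subsingleton (e x)]))
  obtain ⟨s⟩ := Cardinal.lift_mk_eq'.mp (le_antisymm hle (by simpa using hge))
  exact ⟨e.trans (FreeGroup.freeGroupCongr s)⟩

theorem FreeGroup.injective_of_not_commute {H : Type*} [Group H] [IsFreeGroup H]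
    {χ : FreeGroup (Fin 2) →* H} (hχ : χ (of 0) * χ (of 1) ≠ χ (of 1) * χ (of 0)) :
    Injective χ := by
  -- `χ.range` is free by Nielsen–Schreier (the instance `subgroupIsFreeOfIsFree`)
  obtain ⟨ε⟩ := IsFreeGroup.nonempty_mulEquiv_freeGroup_fin_two χ.rangeRestrict_surjective
    (x := χ.rangeRestrict (of 0)) (y := χ.rangeRestrict (of 1))
    fun h => hχ (congrArg Subtype.val h)
  have := Group.ResiduallyFinite.injective_of_surjective
    (φ := ε.toMonoidHom.comp χ.rangeRestrict) (ε.surjective.comp χ.rangeRestrict_surjective)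
  exact χ.rangeRestrict_injective_iff.mp fun u v h => this (congrArg ε h)

theorem Subgroup.closure_pair_mul_comm {G : Type*} [Group G] {a b : G} (h : a * b = b * a)
    (x y : closure ({a, b} : Set G)) : x * y = y * x := by
  have := isMulCommutative_closure (k := {a, b}) <| by
    rintro _ (rfl | rfl) _ (rfl | rfl) <;> simp [h]
  exact mul_comm' x y

/-- In a residually free group, two elements generating a non-abelian subgroup
generate a free group of rank 2. -/
theorem two_elements_nonabelian_free (G : Type*) [Group G]
    (hRF : ∀ g : G, g ≠ 1 → ∃ f : G →* FreeGroup (Fin 2), f g ≠ 1)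
    (a b : G)
    (hna : ¬ ∀ x y : Subgroup.closure ({a, b} : Set G), x * y = y * x) :
    Nonempty ((Subgroup.closure ({a, b} : Set G)) ≃* FreeGroup (Fin 2)) := by
  have hab : a * b ≠ b * a := fun h => hna (Subgroup.closure_pair_mul_comm h)
  obtain ⟨f, hf⟩ := hRF ⁅a, b⁆ (commutatorElement_eq_one_iff_mul_comm.not.mpr hab)
  rw [map_commutatorElement, Ne, commutatorElement_eq_one_iff_mul_comm] at hf
  let π := FreeGroup.lift ![a, b]
  have hπ : Injective π :=
    fun u v h => FreeGroup.injective_of_not_commute (χ := f.comp π) (by simpa [π] using hf)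
      (congrArg f h)
  have hrange : π.range = Subgroup.closure {a, b} := by
    rw [FreeGroup.range_lift_eq_closure, Matrix.range_cons_cons_empty]
  exact ⟨(MulEquiv.subgroupCongr hrange.symm).trans (MonoidHom.ofInjective hπ).symm⟩
end

section
/- If G is a residually free group, then the centralizer in G of the commutator subgroup [G,G] equals the centre of G. -/
/-!
If `z` centralizes `[G, G]`, then `z` commutes with `⁅z, g⁆` for every `g`, and residual freeness
reduces the claim `⁅z, g⁆ = 1` to free groups. There, by Nielsen–Schreier and the exponent-sum
homomorphisms, the centralizer of `a ≠ 1` is infinite cyclic, say `⟨h⟩`. If `a` commutes with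
`⁅a, b⁆`, it commutes with `b a b⁻¹`, so conjugation by `b` preserves `⟨h⟩` and sends `h` to
`h` or `h⁻¹`; in either case `b` commutes with `h`, hence with `a`.
-/

open scoped commutatorElement

namespace FreeGroup

variable {α : Type*}

theorem not_commute_of_ne {i j : α} (hij : i ≠ j) : ¬Commute (of i) (of j) := by
  classical
  intro h
  have := h.map (FreeGroup.lift fun k => if k = i then Equiv.swap (0 : Fin 3) 1 else Equiv.swap 1 2)
  simp only [lift_apply_of, if_pos, if_neg hij.symm] at this
  exact absurd this.eq (by decide)

instance isCyclic_of_subsingleton [Subsingleton α] : IsCyclic (FreeGroup α) := by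
  cases isEmpty_or_nonempty α
  · infer_instance
  · have : Unique α := uniqueOfSubsingleton (Classical.arbitrary α)
    infer_instance

theorem subsingleton_of_isMulCommutative [IsMulCommutative (FreeGroup α)] : Subsingleton α :=
  ⟨fun _ _ => by_contra fun hij => not_commute_of_ne hij (mul_comm' _ _)⟩

end FreeGroup

theorem IsFreeGroup.isCyclic_of_isMulCommutative (G : Type*) [Group G] [IsFreeGroup G]
    [IsMulCommutative G] : IsCyclic G := by
  obtain ⟨ι, ⟨b⟩⟩ := IsFreeGroup.nonempty_basis (G := G)
  have : IsMulCommutative (FreeGroup ι) := isMulCommutative_iff.mpr fun x y =>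
    b.repr.symm.injective (by simp only [map_mul, mul_comm' (b.repr.symm x)])
  have := FreeGroup.subsingleton_of_isMulCommutative (α := ι)
  exact isCyclic_of_surjective b.repr.symm b.repr.symm.surjective

namespace FreeGroup

variable {α : Type*}

theorem exists_zpow_eq_of_commute {x y : FreeGroup α} (h : Commute x y) :
    ∃ w : FreeGroup α, ∃ m n : ℤ, w ^ m = x ∧ w ^ n = y := by
  let S := Subgroup.closure {x, y}
  have : IsMulCommutative S := Subgroup.isMulCommutative_closure (by
    rintro _ (rfl | rfl) _ (rfl | rfl)
    exacts [rfl, h.eq, h.symm.eq, rfl])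
  obtain ⟨w, hw⟩ := (IsFreeGroup.isCyclic_of_isMulCommutative S).exists_generator
  obtain ⟨m, hm⟩ := hw ⟨x, Subgroup.subset_closure (by simp)⟩
  obtain ⟨n, hn⟩ := hw ⟨y, Subgroup.subset_closure (by simp)⟩
  exact ⟨w, m, n, congrArg Subtype.val hm, congrArg Subtype.val hn⟩

theorem exists_zpow_eq_zpow_of_commute {x y : FreeGroup α} (hx : x ≠ 1) (h : Commute x y) :
    ∃ m n : ℤ, m ≠ 0 ∧ y ^ m = x ^ n := by
  obtain ⟨w, m, n, rfl, rfl⟩ := exists_zpow_eq_of_commute h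
  refine ⟨m, n, fun hm => hx (by rw [hm, zpow_zero]), ?_⟩
  rw [← zpow_mul, ← zpow_mul, mul_comm]

theorem subsingleton_of_mem_center {z : FreeGroup α} (hz : z ∈ Subgroup.center (FreeGroup α))
    (hz1 : z ≠ 1) : Subsingleton α := by
  classical
  refine ⟨fun i j => by_contra fun hij => hz1 ?_⟩
  obtain ⟨m, n, hm, hzi⟩ :=
    exists_zpow_eq_zpow_of_commute (of_ne_one i) (Subgroup.mem_center_iff.mp hz (of i))
  obtain ⟨m', n', hm', hzj⟩ :=
    exists_zpow_eq_zpow_of_commute (of_ne_one j) (Subgroup.mem_center_iff.mp hz (of j))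
  have hij' : (of i) ^ (n * m') = (of j) ^ (n' * m) := calc
    (of i) ^ (n * m') = z ^ (m * m') := by rw [zpow_mul, ← hzi, ← zpow_mul]
    _ = (of j) ^ (n' * m) := by rw [mul_comm, zpow_mul, hzj, ← zpow_mul]
  let χ : FreeGroup α →* Multiplicative ℤ := lift fun k => if k = i then .ofAdd 1 else 1
  have hχ := congrArg χ hij'
  simp only [map_zpow, lift_apply_of, ↓reduceIte, Ne.symm hij, one_zpow,
    IsMulTorsionFree.zpow_eq_one_iff, ofAdd_eq_one, one_ne_zero, mul_eq_zero, false_or, χ] at hχ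
  rwa [hχ.resolve_right hm', zpow_zero, IsMulTorsionFree.zpow_eq_one_iff_left hm] at hzi

theorem isCyclic_centralizer {a : FreeGroup α} (ha : a ≠ 1) :
    IsCyclic (Subgroup.centralizer {a}) := by
  let C := Subgroup.centralizer {a}
  let e := IsFreeGroup.toFreeGroup C
  let a' : C := ⟨a, Subgroup.mem_centralizer_singleton_iff.mpr rfl⟩
  have : Subsingleton (IsFreeGroup.Generators C) := by
    refine subsingleton_of_mem_center (z := e a') (Subgroup.mem_center_iff.mpr fun u => ?_) ?_
    · have hu : e.symm u * a' = a' * e.symm u :=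
        Subtype.ext (Subgroup.mem_centralizer_singleton_iff.mp (e.symm u).2)
      simpa using congrArg e hu
    · exact (map_ne_one_iff e e.injective).mpr fun h => ha (congrArg Subtype.val h)
  exact isCyclic_of_surjective e.symm e.symm.surjective

theorem commute_trans {x a y : FreeGroup α} (ha : a ≠ 1) (hxa : Commute x a) (hay : Commute a y) :
    Commute x y := by
  have := isCyclic_centralizer ha
  have hmem {g : FreeGroup α} (hg : Commute a g) : g ∈ Subgroup.centralizer {a} :=
    Subgroup.mem_centralizer_singleton_iff.mpr hg.eq.symm
  exact congrArg Subtype.val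
    (mul_comm' (⟨x, hmem hxa.symm⟩ : Subgroup.centralizer {a}) ⟨y, hmem hay⟩)

theorem conj_mem_zpowers_of_commute_conj {a b h : FreeGroup α} (ha : a ≠ 1)
    (hab : Commute a (b * a * b⁻¹))
    (hC : Subgroup.centralizer {a} = Subgroup.zpowers h) : b * h * b⁻¹ ∈ Subgroup.zpowers h := by
  have hah : Commute a h :=
    (Subgroup.mem_centralizer_singleton_iff.mp (hC ▸ Subgroup.mem_zpowers h)).symm
  have hc : b * a * b⁻¹ ≠ 1 := by simpa using ha
  rw [← hC, Subgroup.mem_centralizer_singleton_iff]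
  exact (commute_trans hc hab (by simpa using hah.map (MulAut.conj b))).eq.symm

theorem commute_of_conj_eq_inv {b h : FreeGroup α} (hbh : b * h * b⁻¹ = h⁻¹) : Commute b h := by
  have hb2 : Commute (b * b) h := by
    refine mul_inv_eq_iff_eq_mul.mp ?_
    calc b * b * h * (b * b)⁻¹ = b * (b * h * b⁻¹) * b⁻¹ := by group
      _ = b * h⁻¹ * b⁻¹ := by rw [hbh]
      _ = (b * h * b⁻¹)⁻¹ := by group
      _ = h := by rw [hbh, inv_inv]
  rcases eq_or_ne (b * b) 1 with hb | hb
  · rw [← sq, sq_eq_one] at hb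
    rw [hb]
    exact Commute.one_left h
  · exact commute_trans hb ((Commute.refl b).mul_right (Commute.refl b)) hb2

theorem conj_eq_self_or_inv {a b h : FreeGroup α} (ha : a ≠ 1) (hab : Commute a (b * a * b⁻¹))
    (hC : Subgroup.centralizer {a} = Subgroup.zpowers h) :
    b * h * b⁻¹ = h ∨ b * h * b⁻¹ = h⁻¹ := by
  have hh : h ≠ 1 := by
    rintro rfl
    rw [Subgroup.zpowers_one_eq_bot, Subgroup.eq_bot_iff_forall] at hC
    exact ha (hC a (Subgroup.mem_centralizer_singleton_iff.mpr rfl))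
  have hab' : Commute a (b⁻¹ * a * b⁻¹⁻¹) := by
    have := hab.map (MulAut.conj b⁻¹)
    rw [MulAut.conj_apply, MulAut.conj_apply, show b⁻¹ * (b * a * b⁻¹) * b⁻¹⁻¹ = a by group] at this
    exact this.symm
  obtain ⟨s, hs⟩ := Subgroup.mem_zpowers_iff.mp (conj_mem_zpowers_of_commute_conj ha hab hC)
  obtain ⟨t, ht⟩ := Subgroup.mem_zpowers_iff.mp (conj_mem_zpowers_of_commute_conj ha hab' hC)
  have hts : h ^ (t * s - 1) = 1 := by
    rw [zpow_sub, zpow_one, mul_inv_eq_one, zpow_mul, ht, conj_zpow, hs]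
    group
  rw [IsMulTorsionFree.zpow_eq_one_iff_right hh, sub_eq_zero] at hts
  rcases Int.eq_one_or_neg_one_of_mul_eq_one' hts with ⟨-, rfl⟩ | ⟨-, rfl⟩
  · exact Or.inl (by rw [← hs, zpow_one])
  · exact Or.inr (by rw [← hs, zpow_neg_one])

theorem commute_of_commute_conj {a b : FreeGroup α} (hab : Commute a (b * a * b⁻¹)) :
    Commute a b := by
  rcases eq_or_ne a 1 with rfl | ha
  · exact Commute.one_left b
  obtain ⟨h, hC⟩ := (Subgroup.isCyclic_iff_exists_zpowers_eq_top _).mp (isCyclic_centralizer ha)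
  have hbh : Commute b h := by
    rcases conj_eq_self_or_inv ha hab hC.symm with hbh | hbh
    · exact mul_inv_eq_iff_eq_mul.mp hbh
    · exact commute_of_conj_eq_inv hbh
  obtain ⟨p, rfl⟩ :=
    Subgroup.mem_zpowers_iff.mp (hC ▸ Subgroup.mem_centralizer_singleton_iff.mpr rfl)
  exact (hbh.zpow_right p).symm

theorem commutatorElement_eq_one_of_commute {a b : FreeGroup α} (h : Commute a ⁅a, b⁆) :
    ⁅a, b⁆ = 1 := by
  have hab : Commute a (b * a * b⁻¹) := by
    have := ((Commute.refl a).inv_right.mul_right h).inv_right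
    rwa [commutatorElement_def, show (a⁻¹ * (a * b * a⁻¹ * b⁻¹))⁻¹ = b * a * b⁻¹ by group] at this
  exact commutatorElement_eq_one_iff_commute.mpr (commute_of_commute_conj hab)

end FreeGroup

theorem commute_of_commute_commutatorElement {G α : Type*} [Group G]
    (hRF : ∀ g : G, g ≠ 1 → ∃ f : G →* FreeGroup α, f g ≠ 1) {z g : G}
    (h : Commute z ⁅z, g⁆) : Commute z g := by
  refine commutatorElement_eq_one_iff_commute.mp (by_contra fun hne => ?_)
  obtain ⟨f, hf⟩ := hRF _ hne
  rw [map_commutatorElement] at hf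
  exact hf (FreeGroup.commutatorElement_eq_one_of_commute (by simpa using h.map f))

/-- In a residually free group, the centralizer of the commutator subgroup is the centre. -/
theorem centralizer_commutator_eq_center (G : Type*) [Group G]
    (hRF : ∀ g : G, g ≠ 1 → ∃ f : G →* FreeGroup (Fin 2), f g ≠ 1) :
    Subgroup.centralizer ((commutator G : Subgroup G) : Set G) = Subgroup.center G := by
  refine le_antisymm (fun z hz => Subgroup.mem_center_iff.mpr fun g => ?_)
    (Subgroup.center_le_centralizer _)
  have hzg : ⁅z, g⁆ ∈ commutator G :=
    Subgroup.commutator_mem_commutator (Subgroup.mem_top z) (Subgroup.mem_top g)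
  exact (commute_of_commute_commutatorElement hRF
    (Subgroup.mem_centralizer_iff.mp hz _ hzg).symm).symm.eq
end

section
/- If A is a non-trivial group and B is a group containing non-trivial elements b1, b2 such that every homomorphism from B to a free group kills b1 or b2, then the free product A * B is not residually free. -/
/-!
Take `ξ = ⁅b₁, ⁅b₂, a⁆⁆`. Any homomorphism to a free group kills `b₁` or `b₂`, hence kills `ξ`.
But `ξ ≠ 1` in `A ∗ B`: its conjugate by `b₂` is an alternating product of eight non-trivial
letters, which is non-trivial by the normal form theorem for free products.
-/

open Monoid
open scoped commutatorElement

namespace Monoid.CoprodI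

variable {ι : Type*} {M : ι → Type*} [∀ i, Group (M i)]

theorem NeWord.prod_ne_one {i j : ι} (w : NeWord M i j) : w.prod ≠ 1 := by
  classical
  intro h
  have : w.toWord = Word.empty :=
    Word.equiv.symm.injective (h.trans Word.prod_empty.symm)
  exact w.toList_ne_nil (congrArg Word.toList this)

/-- Conjugating by `z` merges the two letters of `M j` at the ends of `⁅y, ⁅z, x⁆⁆` into
`z⁻¹ y z ≠ 1`, leaving the reduced word `(z⁻¹ y z) x z⁻¹ x⁻¹ y⁻¹ x z x⁻¹`. -/
theorem commutatorElement_of_commutatorElement_of_ne_one {i j : ι} (hij : i ≠ j)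
    {x : M i} {y z : M j} (hx : x ≠ 1) (hy : y ≠ 1) (hz : z ≠ 1) :
    ⁅of y, ⁅of z, of x⁆⁆ ≠ 1 := by
  have hyz : z⁻¹ * y * z ≠ 1 := by rwa [Ne, mul_assoc, inv_mul_eq_one, right_eq_mul]
  let w : NeWord M j i :=
    .append (.singleton _ hyz) hij.symm <| .append (.singleton x hx) hij <|
    .append (.singleton _ (inv_ne_one.mpr hz)) hij.symm <|
    .append (.singleton _ (inv_ne_one.mpr hx)) hij <|
    .append (.singleton _ (inv_ne_one.mpr hy)) hij.symm <| .append (.singleton x hx) hij <|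
    .append (.singleton z hz) hij.symm <| .singleton _ (inv_ne_one.mpr hx)
  have hw : (of z)⁻¹ * ⁅of y, ⁅of z, of x⁆⁆ * of z = w.prod := by
    simp only [w, NeWord.append_prod, NeWord.prod_singleton, commutatorElement_def, map_inv,
      map_mul]
    group
  intro h
  rw [h, mul_one, inv_mul_cancel] at hw
  exact w.prod_ne_one hw.symm

end Monoid.CoprodI

namespace Monoid.Coprod

universe u v

variable {A : Type u} {B : Type v} [Group A] [Group B]

variable (A B) in
abbrev ULiftFactors : Bool → Type (max u v) := fun b => cond b (ULift.{v} A) (ULift.{u} B)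

instance : ∀ b, Group (ULiftFactors A B b)
  | true => inferInstanceAs (Group (ULift A))
  | false => inferInstanceAs (Group (ULift B))

def toCoprodI : A ∗ B →* CoprodI (ULiftFactors A B) :=
  lift ((CoprodI.of (i := true)).comp MulEquiv.ulift.symm.toMonoidHom)
    ((CoprodI.of (i := false)).comp MulEquiv.ulift.symm.toMonoidHom)

theorem commutatorElement_inr_commutatorElement_inr_inl_ne_one {a : A} {b₁ b₂ : B}
    (ha : a ≠ 1) (hb₁ : b₁ ≠ 1) (hb₂ : b₂ ≠ 1) :
    ⁅(inr b₁ : A ∗ B), ⁅(inr b₂ : A ∗ B), (inl a : A ∗ B)⁆⁆ ≠ 1 := by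
  intro h
  have := congrArg toCoprodI h
  rw [map_commutatorElement, map_commutatorElement, map_one] at this
  exact CoprodI.commutatorElement_of_commutatorElement_of_ne_one (by decide)
    (MulEquiv.ulift.symm.map_ne_one_iff.mpr ha) (MulEquiv.ulift.symm.map_ne_one_iff.mpr hb₁)
    (MulEquiv.ulift.symm.map_ne_one_iff.mpr hb₂) this

end Monoid.Coprod

/-- If `A` is non-trivial and `B` has two non-trivial elements `b₁, b₂` such that
every homomorphism from `B` to a free group kills `b₁` or `b₂`, then the free
product `A ∗ B` is not residually free. -/
theorem free_product_not_residually_free (A B : Type*) [Group A] [Group B]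
    (a : A) (ha : a ≠ 1) (b₁ b₂ : B) (hb₁ : b₁ ≠ 1) (hb₂ : b₂ ≠ 1)
    (hkill : ∀ (α : Type) (f : B →* FreeGroup α), f b₁ = 1 ∨ f b₂ = 1) :
    ¬ ∀ g : Monoid.Coprod A B, g ≠ 1 →
        ∃ (α : Type) (f : Monoid.Coprod A B →* FreeGroup α), f g ≠ 1 := by
  intro h
  obtain ⟨α, f, hf⟩ :=
    h _ (Coprod.commutatorElement_inr_commutatorElement_inr_inl_ne_one ha hb₁ hb₂)
  refine hf ?_
  rw [map_commutatorElement, map_commutatorElement]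
  rcases hkill α (f.comp Coprod.inr) with hk | hk
  · simp [show f (Coprod.inr b₁) = 1 from hk]
  · simp [show f (Coprod.inr b₂) = 1 from hk]
end

section
/- Let G = A *_C B be an amalgamated free product over an abelian subgroup C, and suppose G is residually free and A is non-abelian. Then the intersection of the centre of A with C is contained in the normal core of C in B (the intersection of all B-conjugates of C). -/
/-!
Put `d = b c b⁻¹ ∈ B` and suppose `d ∉ C`. Not every commutator of `A` lies in `C`: otherwise
`[x, y]` and `[x², y]` commute, and in a free group this forces `x` and `y` to commute
(an element commuting with a conjugate `u t u⁻¹` of itself commutes with `u`), so by residual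
freeness `A` would be abelian. For a commutator `[u, v] ∉ C`, the normal form in `A *_C B` shows
that `[u, v]` and `d` do not commute, so some map `f` to a free group keeps them non-commuting.
Then `f d ≠ 1`, hence `f c ≠ 1`, and as `c` is central in `A`, commutative transitivity of free
groups makes `f(A)` abelian, so `f [u, v] = 1`: a contradiction.
-/

open Monoid PushoutI

open Subgroup

open scoped commutatorElement

namespace IsFreeGroup

variable {G : Type*} [Group G] [IsFreeGroup G]

open Classical in
noncomputable def expSum (s : Generators G) : G →* Multiplicative ℤ :=
  lift fun t => if t = s then Multiplicative.ofAdd 1 else 1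

@[simp]
theorem expSum_of_self (s : Generators G) : expSum s (of s) = Multiplicative.ofAdd 1 := by
  simp [expSum]

theorem expSum_of_of_ne {s t : Generators G} (h : t ≠ s) : expSum s (of t) = 1 := by
  simp [expSum, h]

theorem not_commute_of_of_ne {s t : Generators G} (h : s ≠ t) : ¬Commute (of s) (of t) := by
  classical
  intro hst
  have := hst.map (lift fun x => if x = s then Equiv.swap (0 : Fin 3) 1
    else if x = t then Equiv.swap 1 2 else 1)
  rw [lift_of, lift_of, if_pos rfl, if_neg h.symm, if_pos rfl] at this
  exact absurd this.eq (by decide)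

theorem subsingleton_generators [IsMulCommutative G] : Subsingleton (Generators G) :=
  ⟨fun _ _ => by_contra fun hst => not_commute_of_of_ne hst (isMulCommutative_iff.mp ‹_› _ _)⟩

instance isCyclic_of_subsingleton_generators [Subsingleton (Generators G)] : IsCyclic G := by
  have : IsCyclic (FreeGroup (Generators G)) := by
    rcases isEmpty_or_nonempty (Generators G) with _ | ⟨⟨s⟩⟩
    · infer_instance
    · have := uniqueOfSubsingleton s
      infer_instance
  exact isCyclic_of_surjective (toFreeGroup G).symm.toMonoidHom (toFreeGroup G).symm.surjective

theorem isCyclic_of_isMulCommutative_s13 [IsMulCommutative G] : IsCyclic G :=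
  have := subsingleton_generators (G := G)
  inferInstance

theorem exists_zpowers_eq_closure_pair {a b : G} (h : Commute a b) :
    ∃ w : G, zpowers w = closure {a, b} := by
  have : IsMulCommutative (closure {a, b}) := isMulCommutative_closure <| by
    rintro x (rfl | rfl) y (rfl | rfl) <;> first | rfl | exact h.eq | exact h.eq.symm
  exact (closure {a, b}).isCyclic_iff_exists_zpowers_eq_top.mp isCyclic_of_isMulCommutative_s13

theorem mem_zpowers_of_of_commute {z : G} {s : Generators G} (h : Commute z (of s)) :
    z ∈ zpowers (of s) := by
  obtain ⟨w, hw⟩ := exists_zpowers_eq_closure_pair h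
  obtain ⟨k, hk⟩ := mem_zpowers_iff.mp (hw ▸ subset_closure (by simp) : of s ∈ zpowers w)
  have hk1 : k * Multiplicative.toAdd (expSum s w) = 1 := by
    simpa using congrArg (fun x => Multiplicative.toAdd (expSum s x)) hk
  have hw' : w ∈ zpowers (of s) := by
    rcases Int.eq_one_or_neg_one_of_mul_eq_one' hk1 with ⟨rfl, -⟩ | ⟨rfl, -⟩
    · rw [← hk, zpow_one]; exact mem_zpowers w
    · rw [← hk, zpow_neg_one, zpowers_inv]; exact mem_zpowers w
  exact zpowers_le.mpr hw' (hw ▸ subset_closure (by simp))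

theorem isMulCommutative_of_mem_center {z : G} (hz : z ∈ center G) (hz1 : z ≠ 1) :
    IsMulCommutative G := by
  have : Subsingleton (Generators G) := by
    refine ⟨fun s t => by_contra fun hst => hz1 ?_⟩
    have hzs := mem_zpowers_of_of_commute (mem_center_iff.mp hz (of s)).symm
    have hzt := mem_zpowers_of_of_commute (mem_center_iff.mp hz (of t)).symm
    obtain ⟨n, rfl⟩ := mem_zpowers_iff.mp hzs
    obtain ⟨p, hp⟩ := mem_zpowers_iff.mp hzt
    have := congrArg (fun x => Multiplicative.toAdd (expSum s x)) hp
    simp [expSum_of_of_ne (Ne.symm hst)] at this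
    simp [← this]
  exact IsCyclic.isMulCommutative

theorem commute_trans {a b c : G} (hc : c ≠ 1) (hac : Commute a c) (hcb : Commute c b) :
    Commute a b := by
  let H := centralizer {c}
  have hmem {x : G} (hx : Commute x c) : x ∈ H := mem_centralizer_singleton_iff.mpr hx.eq
  have hcen : (⟨c, hmem (.refl c)⟩ : H) ∈ center H :=
    mem_center_iff.mpr fun x => Subtype.ext (mem_centralizer_singleton_iff.mp x.2)
  have := isMulCommutative_of_mem_center hcen (by simpa [Subtype.ext_iff] using hc)
  exact congrArg Subtype.val (isMulCommutative_iff.mp this ⟨a, hmem hac⟩ ⟨b, hmem hcb.symm⟩)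

theorem isMulCommutative_of_forall_apply_eq_one {g : G}
    (h : ∀ ψ : G →* Multiplicative ℤ, ψ g = 1 → ψ = 1) : IsMulCommutative G := by
  have : Subsingleton (Generators G) := by
    refine ⟨fun s t => by_contra fun hst => ?_⟩
    -- a combination of the two exponent sums that vanishes at `g`
    let k := Multiplicative.toAdd (expSum t g)
    let l := Multiplicative.toAdd (expSum s g)
    have hψ := h (expSum s ^ k / expSum t ^ l) <| by
      apply Multiplicative.toAdd.injective
      simp [k, l, mul_comm]
    have hl : l = 0 := by
      simpa [expSum_of_of_ne (Ne.symm hst)] using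
        congrArg (fun ψ => Multiplicative.toAdd (ψ (of t))) hψ
    have hs := h (expSum s) (Multiplicative.toAdd.injective hl)
    simpa using congrArg (fun ψ => ψ (of s)) hs
  exact IsCyclic.isMulCommutative

theorem commute_of_commute_conj {z g : G} (h : Commute z (g * z * g⁻¹)) : Commute g z := by
  let H := closure {z, g}
  let z' : H := ⟨z, subset_closure (by simp)⟩
  let g' : H := ⟨g, subset_closure (by simp)⟩
  obtain ⟨w, hw⟩ := exists_zpowers_eq_closure_pair (a := z') (b := g' * z' * g'⁻¹)
    (Subtype.ext h.eq)
  obtain ⟨m, hm⟩ := mem_zpowers_iff.mp (hw ▸ subset_closure (by simp) : z' ∈ zpowers w)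
  obtain ⟨n, hn⟩ := mem_zpowers_iff.mp
    (hw ▸ subset_closure (by simp) : g' * z' * g'⁻¹ ∈ zpowers w)
  by_cases hmn : m = n
  · subst hmn
    exact mul_inv_eq_iff_eq_mul.mp (congrArg Subtype.val (hn.symm.trans hm))
  -- `ψ z = ψ (g z g⁻¹)` reads `m • ψ w = n • ψ w`, so every `ψ` into `ℤ` kills `z`;
  -- then `ψ` is determined by `ψ g`, which leaves room for at most one free generator.
  have hz' (ψ : H →* Multiplicative ℤ) : ψ z' = 1 := by
    have hconj : ψ w ^ m = ψ w ^ n := by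
      rw [← map_zpow, ← map_zpow, hm, hn, map_mul, map_mul, map_inv, mul_comm (ψ g'),
        mul_inv_cancel_right]
    have : (m - n) * Multiplicative.toAdd (ψ w) = 0 := by
      have := congrArg Multiplicative.toAdd hconj
      simp only [toAdd_zpow, smul_eq_mul] at this
      rw [sub_mul, this, sub_self]
    have hw1 : ψ w = 1 :=
      toAdd_eq_zero.mp ((mul_eq_zero.mp this).resolve_left (sub_ne_zero.mpr hmn))
    rw [← hm, map_zpow, hw1, one_zpow]
  have := isMulCommutative_of_forall_apply_eq_one (g := g') fun ψ hψ => by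
    refine MonoidHom.eq_of_eqOn_dense closure_closure_coe_preimage ?_
    rintro ⟨x, hx⟩ (rfl | rfl : x = z ∨ x = g)
    · exact hz' ψ
    · exact hψ
  exact congrArg Subtype.val (isMulCommutative_iff.mp this g' z')

theorem commute_of_commute_commutatorElement {u v : G} (h : Commute ⁅u, v⁆ ⁅u * u, v⁆) :
    Commute u v := by
  set t := ⁅u, v⁆ with ht
  have hsq : ⁅u * u, v⁆ = u * t * u⁻¹ * t := by
    simp only [ht, commutatorElement_def]
    group
  have hut : Commute u t := commute_of_commute_conj <| by
    simpa only [hsq, mul_inv_cancel_right] using h.mul_right (Commute.refl t).inv_right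
  have hdec : u⁻¹ * t = (v * u * v⁻¹)⁻¹ := by
    simp only [ht, commutatorElement_def]
    group
  have : Commute u (v * u * v⁻¹) := by
    simpa only [hdec, inv_inv] using ((Commute.refl u).inv_right.mul_right hut).inv_right
  exact (commute_of_commute_conj this).symm

end IsFreeGroup

def IsResiduallyFree (G : Type*) [Group G] : Prop :=
  ∀ g : G, g ≠ 1 → ∃ (β : Type) (f : G →* FreeGroup β), f g ≠ 1

namespace IsResiduallyFree

variable {G : Type*} [Group G]

theorem exists_not_commute (hG : IsResiduallyFree G) {a b : G} (h : ¬Commute a b) :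
    ∃ (β : Type) (f : G →* FreeGroup β), ¬Commute (f a) (f b) := by
  obtain ⟨β, f, hf⟩ := hG _ (mt commutatorElement_eq_one_iff_commute.mp h)
  refine ⟨β, f, fun hc => hf ?_⟩
  rw [map_commutatorElement, commutatorElement_eq_one_iff_commute]
  exact hc

theorem commute_of_commute_commutatorElement (hG : IsResiduallyFree G) {u v : G}
    (h : Commute ⁅u, v⁆ ⁅u * u, v⁆) : Commute u v := by
  by_contra huv
  obtain ⟨β, f, hf⟩ := hG.exists_not_commute huv
  refine hf (IsFreeGroup.commute_of_commute_commutatorElement ?_)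
  simpa only [map_commutatorElement, map_mul] using h.map f

end IsResiduallyFree

namespace Monoid.PushoutI

variable {ι : Type*} {G : ι → Type*} [∀ i, Group (G i)]

theorem not_commute_of_notMem_range {H : Type*} [Group H] {φ : ∀ i, H →* G i}
    (hφ : ∀ i, Function.Injective (φ i)) {i j : ι} (hij : i ≠ j) {a : G i} {b : G j}
    (ha : a ∉ (φ i).range) (hb : b ∉ (φ j).range) :
    ¬Commute (of (φ := φ) i a) (of j b) := by
  intro hab
  have hne {k : ι} {x : G k} (hx : x ∉ (φ k).range) : x ≠ 1 := fun h => hx (h ▸ one_mem _)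
  let w : CoprodI.Word G :=
    ⟨[⟨i, a⟩, ⟨j, b⟩, ⟨i, a⁻¹⟩, ⟨j, b⁻¹⟩], by simp [hne ha, hne hb], by simp [hij, hij.symm]⟩
  have hw : Reduced φ w := by
    simp only [Reduced, w, List.mem_cons, List.not_mem_nil, or_false, forall_eq_or_imp,
      forall_eq, inv_mem_iff]
    exact ⟨ha, hb, ha, hb⟩
  have := hw.eq_empty_of_mem_range hφ <| by
    simp [w, CoprodI.Word.prod, ← mul_assoc, hab.eq]
  simp [w, CoprodI.Word.empty] at this

theorem exists_commutatorElement_notMem_range {H : Type*} [CommGroup H] {φ : ∀ i, H →* G i}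
    (hφ : ∀ i, Function.Injective (φ i)) (hG : IsResiduallyFree (PushoutI φ)) {i : ι}
    (hi : ∃ x y : G i, ¬Commute x y) :
    ∃ u v : G i, ⁅u, v⁆ ∉ (φ i).range := by
  by_contra! hrange
  obtain ⟨x, y, hxy⟩ := hi
  refine hxy (.of_map (of_injective hφ i) (hG.commute_of_commute_commutatorElement ?_))
  obtain ⟨c₁, hc₁⟩ := hrange x y
  obtain ⟨c₂, hc₂⟩ := hrange (x * x) y
  simpa only [← map_commutatorElement, ← map_mul, ← hc₁, ← hc₂, of_apply_eq_base] using
    (Commute.all c₁ c₂).map (base φ)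

end Monoid.PushoutI

/-- Let `G = A *_C B` be an amalgamated product over an abelian subgroup `C`
(realized as the pushout of injections `φ : C → K i`, with `K false` playing the
role of `A` and `K true` the role of `B`).  If `G` is residually free and `A` is
non-abelian, then `Z(A) ∩ C` is contained in the normal core of `C` in `B`. -/
theorem amalgamated_product_center_in_core
    (C : Type*) [CommGroup C] (K : Bool → Type*) [∀ i, Group (K i)]
    (φ : ∀ i, C →* K i) (hinj : ∀ i, Function.Injective (φ i))
    (hRF : ∀ g : Monoid.PushoutI φ, g ≠ 1 →
      ∃ (β : Type) (f : Monoid.PushoutI φ →* FreeGroup β), f g ≠ 1)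
    (hA : ∃ x y : K false, ¬ Commute x y) :
    ∀ c : C, φ false c ∈ Subgroup.center (K false) →
      ∀ b : K true,
        Monoid.PushoutI.of (φ := φ) true b * Monoid.PushoutI.base φ c *
            (Monoid.PushoutI.of (φ := φ) true b)⁻¹ ∈
          (Monoid.PushoutI.base φ).range := by
  intro c hc b
  set d := b * φ true c * b⁻¹
  have hconj : of (φ := φ) true b * base φ c * (of true b)⁻¹ = of true d := by
    simp only [d, map_mul, map_inv, of_apply_eq_base]
  rw [hconj]
  by_cases hd : d ∈ (φ true).range
  · obtain ⟨c', hc'⟩ := hd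
    exact ⟨c', by rw [← hc', of_apply_eq_base]⟩
  exfalso
  obtain ⟨u, v, huv⟩ := exists_commutatorElement_notMem_range hinj hRF hA
  obtain ⟨β, f, hf⟩ := IsResiduallyFree.exists_not_commute hRF
    (not_commute_of_notMem_range hinj Bool.false_ne_true huv hd)
  refine hf ?_
  by_cases hfd : f (of true d) = 1
  · rw [hfd]
    exact Commute.one_right _
  have hfc : f (base φ c) ≠ 1 := fun h1 =>
    hfd (by rw [← hconj, map_mul, map_mul, h1, mul_one, map_inv, mul_inv_cancel])
  have hcentral (a : K false) : Commute (f (of false a)) (f (base φ c)) := by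
    rw [← of_apply_eq_base φ false c]
    exact (Commute.map (mem_center_iff.mp hc a) (of false)).map f
  have hkill : f (of false ⁅u, v⁆) = 1 := by
    rw [map_commutatorElement, map_commutatorElement, commutatorElement_eq_one_iff_commute]
    exact IsFreeGroup.commute_trans hfc (hcentral u) (hcentral v).symm
  rw [hkill]
  exact Commute.one_left _
end

section
/- Let G be a residually free group and Z a cyclic subgroup of G. Then there exists a finite-index subgroup G' of G containing Z and a homomorphism r : G' → Z restricting to the identity on Z (i.e. Z is a virtual retract of G). -/
/-!
A nontrivial element of a free group is conjugate to a cyclically reduced word `c` of length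
`n`. Reading `c` around a cycle of length `n` with labelled edges gives partial permutations of
`ZMod n`, one per generator, which are injective because `c` is cyclically reduced; extending them
to permutations gives a finite cover of the rose in which `c` lifts to a closed loop at `0`. On
the finite-index subgroup of loops at `0`, counting signed crossings of the edge labelled by the
first letter of `c` is a homomorphism to `ℤ` taking the value `1` on `c`; it is realised as a
coordinate of a permutational wreath product `ℤ ≀ Perm (ZMod n)`. For a residually free group, a
homomorphism to a free group not killing `x` pulls this character back, and `k ↦ x ^ k` turns it
into a retraction onto `⟨x⟩`.
-/

open Equiv

section VirtualRetract

variable {G K : Type*} [Group G] [Group K]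

def Subgroup.IsVirtualRetract (R : Subgroup G) : Prop :=
  ∃ H : Subgroup G, H.index ≠ 0 ∧ R ≤ H ∧
    ∃ r : H →* G, (∀ h, r h ∈ R) ∧ ∀ h : H, (h : G) ∈ R → r h = h

theorem Subgroup.isVirtualRetract_bot : (⊥ : Subgroup G).IsVirtualRetract :=
  ⟨⊤, by simp, bot_le, 1, fun _ => one_mem _, fun h hh => by simp [Subgroup.mem_bot.mp hh]⟩

def HasVirtualCharacterOne (g : G) : Prop :=
  ∃ (H : Subgroup G) (hg : g ∈ H) (χ : H →* Multiplicative ℤ),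
    H.index ≠ 0 ∧ χ ⟨g, hg⟩ = Multiplicative.ofAdd 1

theorem Subgroup.index_comap_ne_zero {H : Subgroup K} (hH : H.index ≠ 0) (f : G →* K) :
    (H.comap f).index ≠ 0 := fun h =>
  hH (Subgroup.index_eq_zero_of_relIndex_eq_zero (K := f.range) (by rwa [← Subgroup.index_comap]))

theorem HasVirtualCharacterOne.of_map {g : G} (f : G →* K) (h : HasVirtualCharacterOne (f g)) :
    HasVirtualCharacterOne g := by
  obtain ⟨H, hg, χ, hH, hχ⟩ := h
  exact ⟨H.comap f, hg, χ.comp (f.subgroupComap H), H.index_comap_ne_zero hH f, hχ⟩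

theorem HasVirtualCharacterOne.conj {g : G} (h : HasVirtualCharacterOne g) (u : G) :
    HasVirtualCharacterOne (u * g * u⁻¹) :=
  of_map (MulAut.conj u⁻¹).toMonoidHom (by simpa [mul_assoc] using h)

theorem HasVirtualCharacterOne.isVirtualRetract_zpowers {g : G} (h : HasVirtualCharacterOne g) :
    (Subgroup.zpowers g).IsVirtualRetract := by
  obtain ⟨H, hg, χ, hH, hχ⟩ := h
  refine ⟨H, hH, Subgroup.zpowers_le.mpr hg, (zpowersHom G g).comp χ, fun h => ⟨_, rfl⟩, ?_⟩
  rintro h ⟨k, hk⟩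
  have : h = ⟨g, hg⟩ ^ k := Subtype.ext hk.symm
  simp [this, hχ]

end VirtualRetract

namespace SemidirectProduct

variable {Q V A : Type*} [Group Q] [MulAction Q V] [CommGroup A]

theorem mul_left_apply (g h : (V → A) ⋊[mulAutArrow] Q) (v : V) :
    (g * h).left v = g.left v * h.left (g.right⁻¹ • v) := rfl

theorem inv_left_apply (g : (V → A) ⋊[mulAutArrow] Q) (v : V) :
    g⁻¹.left v = (g.left (g.right • v))⁻¹ := by
  rw [inv_left]
  show g.left⁻¹ (g.right⁻¹⁻¹ • v) = _
  rw [inv_inv]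
  rfl

def evalAtFixedPoint (v : V) :
    (MulAction.stabilizer Q v).comap (rightHom : (V → A) ⋊[mulAutArrow] Q →* Q) →* A where
  toFun g := (g : (V → A) ⋊[mulAutArrow] Q).left v
  map_one' := rfl
  map_mul' g h := by
    have hg : (g : (V → A) ⋊[mulAutArrow] Q).right⁻¹ • v = v := inv_smul_eq_iff.mpr g.2.symm
    simp only [Subgroup.coe_mul, mul_left_apply, hg]

theorem prod_range_walk (p : ℕ → V) (γ : ℕ → (V → A) ⋊[mulAutArrow] Q) (k : ℕ)
    (hγ : ∀ j < k, (γ j).right • p (j + 1) = p j) :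
    ((List.range k).map γ).prod.right • p k = p 0 ∧
      ((List.range k).map γ).prod.left (p 0) = ∏ j ∈ Finset.range k, (γ j).left (p j) := by
  induction k with
  | zero => simp
  | succ k ih =>
    obtain ⟨hright, hleft⟩ := ih fun j hj => hγ j (by omega)
    have hback : ((List.range k).map γ).prod.right⁻¹ • p 0 = p k :=
      inv_smul_eq_iff.mpr hright.symm
    rw [List.range_succ, List.map_append, List.prod_append, List.map_singleton,
      List.prod_singleton]
    refine ⟨?_, ?_⟩
    · rw [mul_right, mul_smul, hγ k k.lt_succ_self, hright]
    · rw [mul_left_apply, hleft, hback, Finset.prod_range_succ]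

theorem hasVirtualCharacterOne_of_fixedPoint {G : Type*} [Group G] [Finite Q]
    (φ : G →* (V → Multiplicative ℤ) ⋊[mulAutArrow] Q) {g : G} {v : V}
    (hright : (φ g).right • v = v) (hleft : (φ g).left v = Multiplicative.ofAdd 1) :
    HasVirtualCharacterOne g := by
  set K := (MulAction.stabilizer Q v).comap
    (rightHom : (V → Multiplicative ℤ) ⋊[mulAutArrow] Q →* Q)
  have hK : K.index ≠ 0 := Subgroup.index_comap_ne_zero Subgroup.index_ne_zero_of_finite _
  exact ⟨K.comap φ, hright, (evalAtFixedPoint v).comp (φ.subgroupComap K),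
    K.index_comap_ne_zero hK φ, hleft⟩

end SemidirectProduct

namespace FreeGroup

section CyclicWord

variable {α : Type*} {n : ℕ} (ℓ : ZMod n → α × Bool)

def IsReducedCycle : Prop :=
  ∀ v, (ℓ v).1 = (ℓ (v + 1)).1 → (ℓ v).2 = (ℓ (v + 1)).2

/- The letter `ℓ v` is an edge labelled `(ℓ v).1` between `v` and `v + 1`; the permutation of
that label has to send its source to its target. The orientation (`v + 1 ↦ v` for a positive
letter) is forced by the left action in the semidirect product, under which a word acts from its
last letter to its first. -/
def edgeSource (v : ZMod n) : ZMod n := bif (ℓ v).2 then v + 1 else v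

def edgeTarget (v : ZMod n) : ZMod n := bif (ℓ v).2 then v else v + 1

variable {ℓ}

theorem edgeSource_injOn (hℓ : IsReducedCycle ℓ) (a : α) :
    Set.InjOn (edgeSource ℓ) {v | (ℓ v).1 = a} := by
  intro v hv w hw h
  simp only [Set.mem_ofPred_eq] at hv hw
  simp only [edgeSource] at h
  rcases hbv : (ℓ v).2 <;> rcases hbw : (ℓ w).2 <;>
    simp only [hbv, hbw, cond_true, cond_false] at h
  · exact h
  · subst h
    simpa [hbv, hbw] using hℓ w (hw.trans hv.symm)
  · subst h
    simpa [hbv, hbw] using hℓ v (hv.trans hw.symm)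
  · exact add_right_cancel h

theorem edgeTarget_injOn (hℓ : IsReducedCycle ℓ) (a : α) :
    Set.InjOn (edgeTarget ℓ) {v | (ℓ v).1 = a} := by
  intro v hv w hw h
  simp only [Set.mem_ofPred_eq] at hv hw
  simp only [edgeTarget] at h
  rcases hbv : (ℓ v).2 <;> rcases hbw : (ℓ w).2 <;>
    simp only [hbv, hbw, cond_true, cond_false] at h
  · exact add_right_cancel h
  · rw [← h] at hw hbw
    simpa [hbv, hbw] using hℓ v (hv.trans hw.symm)
  · rw [h] at hv hbv
    simpa [hbv, hbw] using hℓ w (hw.trans hv.symm)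
  · exact h

theorem exists_perm_edgeSource_eq_edgeTarget [NeZero n] (hℓ : IsReducedCycle ℓ) :
    ∃ σ : α → Perm (ZMod n), ∀ v, σ (ℓ v).1 (edgeSource ℓ v) = edgeTarget ℓ v := by
  have (a : α) : ∃ σ : Perm (ZMod n), ∀ v : {v // (ℓ v).1 = a},
      σ (edgeSource ℓ v) = edgeTarget ℓ v :=
    Perm.exists_extending_pair _ _ (edgeSource_injOn hℓ a).injective
      (edgeTarget_injOn hℓ a).injective
  choose σ hσ using this
  exact ⟨σ, fun v => hσ _ ⟨v, rfl⟩⟩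

variable [DecidableEq α]

/- Only the edge at position `0` carries weight, with the sign making its traversal by `ℓ 0`
count `+1`. -/
variable (ℓ) in
def cycleWeight (a : α) (u : ZMod n) : Multiplicative ℤ :=
  if a = (ℓ 0).1 ∧ u = edgeTarget ℓ 0 then .ofAdd (bif (ℓ 0).2 then 1 else -1) else 1

theorem cycleWeight_edgeTarget (hℓ : IsReducedCycle ℓ) (v : ZMod n) :
    cycleWeight ℓ (ℓ v).1 (edgeTarget ℓ v) =
      if v = 0 then .ofAdd (bif (ℓ 0).2 then 1 else -1) else 1 := by
  by_cases hv : v = 0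
  · subst hv
    simp [cycleWeight]
  · rw [cycleWeight, if_neg hv, if_neg]
    rintro ⟨ha, ht⟩
    exact hv (edgeTarget_injOn hℓ _ rfl ha.symm ht)

variable (ℓ) in
def cycleGenerator (σ : α → Perm (ZMod n)) (a : α) :
    (ZMod n → Multiplicative ℤ) ⋊[mulAutArrow] Perm (ZMod n) :=
  ⟨cycleWeight ℓ a, σ a⟩

variable (ℓ) in
def cycleLetter (σ : α → Perm (ZMod n)) (v : ZMod n) :
    (ZMod n → Multiplicative ℤ) ⋊[mulAutArrow] Perm (ZMod n) :=
  bif (ℓ v).2 then cycleGenerator ℓ σ (ℓ v).1 else (cycleGenerator ℓ σ (ℓ v).1)⁻¹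

theorem cycleLetter_right_smul {σ : α → Perm (ZMod n)}
    (hσ : ∀ v, σ (ℓ v).1 (edgeSource ℓ v) = edgeTarget ℓ v) (v : ZMod n) :
    (cycleLetter ℓ σ v).right • (v + 1) = v := by
  have hperm := hσ v
  simp only [edgeSource, edgeTarget] at hperm
  rcases hb : (ℓ v).2 <;> simp only [hb, cond_false, cond_true] at hperm
  · simp only [cycleLetter, cycleGenerator, hb, cond_false, SemidirectProduct.inv_right,
      Perm.smul_def]
    exact Perm.inv_eq_iff_eq.mpr hperm.symm
  · simpa only [cycleLetter, cycleGenerator, hb, cond_true, Perm.smul_def] using hperm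

theorem cycleLetter_left (hℓ : IsReducedCycle ℓ) {σ : α → Perm (ZMod n)}
    (hσ : ∀ v, σ (ℓ v).1 (edgeSource ℓ v) = edgeTarget ℓ v) (v : ZMod n) :
    (cycleLetter ℓ σ v).left v = if v = 0 then .ofAdd 1 else 1 := by
  have hweight := cycleWeight_edgeTarget hℓ v
  have hperm := hσ v
  simp only [edgeSource, edgeTarget] at hweight hperm
  rcases hb : (ℓ v).2 <;> simp only [hb, cond_false, cond_true] at hperm hweight
  · simp only [cycleLetter, cycleGenerator, hb, cond_false, SemidirectProduct.inv_left_apply,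
      Perm.smul_def, hperm, hweight]
    split_ifs with hv
    · subst hv
      simp [hb]
    · rfl
  · simp only [cycleLetter, cycleGenerator, hb, cond_true, hweight]
    split_ifs with hv
    · subst hv
      simp [hb]
    · rfl

theorem hasVirtualCharacterOne_mk_cycle [NeZero n] (hℓ : IsReducedCycle ℓ) :
    HasVirtualCharacterOne (mk ((List.range n).map fun j : ℕ => ℓ j)) := by
  obtain ⟨σ, hσ⟩ := exists_perm_edgeSource_eq_edgeTarget hℓ
  set γ := fun j : ℕ => cycleLetter ℓ σ j
  have hlift : lift (cycleGenerator ℓ σ) (mk ((List.range n).map fun j : ℕ => ℓ j)) =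
      ((List.range n).map γ).prod := by
    rw [lift_mk, List.map_map]
    rfl
  obtain ⟨hright, hleft⟩ := SemidirectProduct.prod_range_walk (fun j : ℕ => (j : ZMod n)) γ n
    fun j _ => by simpa using cycleLetter_right_smul hσ j
  have hweights : ∀ j ∈ Finset.range n, (γ j).left j = if j = 0 then .ofAdd 1 else 1 := by
    intro j hj
    have hzero : n ∣ j ↔ j = 0 :=
      ⟨fun h => Nat.eq_zero_of_dvd_of_lt h (Finset.mem_range.mp hj), fun h => h ▸ dvd_zero n⟩
    simp only [γ, cycleLetter_left hℓ hσ, ZMod.natCast_eq_zero_iff, hzero]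
  refine SemidirectProduct.hasVirtualCharacterOne_of_fixedPoint (lift (cycleGenerator ℓ σ))
    (v := 0) ?_ ?_
  · simpa [hlift] using hright
  · rw [hlift, ← Nat.cast_zero, hleft, Finset.prod_congr rfl hweights,
      Finset.prod_ite_eq' (Finset.range n) 0]
    simp [NeZero.pos n]

end CyclicWord

theorem IsCyclicallyReduced.isReducedCycle_getElem {α : Type*} {L : List (α × Bool)}
    (hL : IsCyclicallyReduced L) [NeZero L.length] :
    IsReducedCycle fun v : ZMod L.length => L[v.val]'(ZMod.val_lt v) := by
  intro v
  have hne : L ≠ [] := List.ne_nil_of_length_pos (Nat.pos_of_neZero _)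
  have hsucc : v + 1 = ((v.val + 1 : ℕ) : ZMod L.length) := by
    push_cast [ZMod.natCast_zmod_val]
    rfl
  by_cases hv : v.val + 1 < L.length
  · simp only [hsucc, ZMod.val_cast_of_lt hv]
    exact List.isChain_iff_getElem.mp hL.isReduced v.val hv
  · have hlast : v.val + 1 = L.length := by
      have := ZMod.val_lt v
      omega
    simp only [hsucc, hlast, ZMod.natCast_self, ZMod.val_zero]
    exact hL.2 _ (by simp [List.getLast?_eq_some_getLast hne, List.getLast_eq_getElem, ← hlast])
      _ (by simp [List.head?_eq_getElem?])

theorem hasVirtualCharacterOne_mk_of_isCyclicallyReduced {α : Type*} [DecidableEq α]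
    {L : List (α × Bool)} (hL : IsCyclicallyReduced L) (hne : L ≠ []) :
    HasVirtualCharacterOne (mk L) := by
  have : NeZero L.length := ⟨by simpa using hne⟩
  have hmap : (List.range L.length).map
      (fun j : ℕ => L[((j : ZMod L.length)).val]'(ZMod.val_lt _)) = L :=
    List.ext_getElem (by simp) fun j _ hj => by simp [Nat.mod_eq_of_lt hj]
  rw [← hmap]
  exact hasVirtualCharacterOne_mk_cycle hL.isReducedCycle_getElem

theorem hasVirtualCharacterOne_of_ne_one {α : Type*} [DecidableEq α] {g : FreeGroup α}
    (hg : g ≠ 1) : HasVirtualCharacterOne g := by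
  set L := g.toWord
  have hconj : g = mk (reduceCyclically.conjugator L) * mk (reduceCyclically L) *
      (mk (reduceCyclically.conjugator L))⁻¹ := by
    rw [inv_mk, mul_mk, mul_mk, reduceCyclically.conj_conjugator_reduceCyclically, mk_toWord]
  have hne : reduceCyclically L ≠ [] := fun h => hg (by rw [hconj, h, ← one_eq_mk]; group)
  rw [hconj]
  exact (hasVirtualCharacterOne_mk_of_isCyclicallyReduced
    (reduceCyclically.isCyclicallyReduced isReduced_toWord) hne).conj _

end FreeGroup

/-- Cyclic subgroups of residually free groups are virtual retracts. -/
theorem residually_free_virtual_retract_cyclic (G : Type*) [Group G]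
    (hRF : ∀ g : G, g ≠ 1 → ∃ f : G →* FreeGroup (Fin 2), f g ≠ 1)
    (x : G) :
    ∃ G' : Subgroup G, G'.index ≠ 0 ∧ Subgroup.zpowers x ≤ G' ∧
      ∃ r : G' →* G, (∀ g : G', r g ∈ Subgroup.zpowers x) ∧
        ∀ g : G', (g : G) ∈ Subgroup.zpowers x → r g = (g : G) := by
  by_cases hx : x = 1
  · rw [hx, Subgroup.zpowers_one_eq_bot]
    exact Subgroup.isVirtualRetract_bot
  obtain ⟨f, hf⟩ := hRF x hx
  exact ((FreeGroup.hasVirtualCharacterOne_of_ne_one hf).of_map f).isVirtualRetract_zpowers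
end

section
/- Let G be a residually free group fitting in a short exact sequence 1 → A → G → Z → 1 with A ≅ Z^2 free abelian of rank 2 (i.e. G = Z^2 ⋊ Z). Then G is abelian, hence isomorphic to Z^3. -/
/-!
Since `A` and `G ⧸ A` are abelian, `G` is metabelian. The image of a metabelian group in a free
group is free (Nielsen–Schreier) and metabelian, and a free group on two distinct generators
`s, t` is not metabelian, as `⁅⁅s, t⁆, ⁅s, t²⁆⁆ ≠ 1`. So every homomorphism from `G` to a free
group has abelian image and kills all commutators; residual freeness makes `G` abelian. An abelian
extension of `ℤ` splits, whence `G ≅ ℤ² × ℤ`.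
-/

open scoped commutatorElement

theorem derivedSeries_two_eq_bot_of_commutator_le {G : Type*} [Group G] {A : Subgroup G}
    (hGA : commutator G ≤ A) (hA : ∀ a ∈ A, ∀ b ∈ A, a * b = b * a) :
    derivedSeries G 2 = ⊥ := by
  rw [derivedSeries_succ, derivedSeries_one, eq_bot_iff]
  calc ⁅commutator G, commutator G⁆ ≤ ⁅A, A⁆ := Subgroup.commutator_mono hGA hGA
    _ = ⊥ := Subgroup.commutator_eq_bot_iff_le_centralizer.mpr
      fun a ha b hb => hA b hb a ha

theorem commutatorElement_commutatorElement_mem_derivedSeries_two {G : Type*} [Group G]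
    (a b c d : G) : ⁅⁅a, b⁆, ⁅c, d⁆⁆ ∈ derivedSeries G 2 := by
  have h1 : ∀ x y : G, ⁅x, y⁆ ∈ derivedSeries G 1 := fun x y => by
    rw [derivedSeries_one]; exact Subgroup.commutator_mem_commutator trivial trivial
  rw [derivedSeries_succ]
  exact Subgroup.commutator_mem_commutator (h1 a b) (h1 c d)

namespace IsFreeGroup

variable {H : Type*} [Group H] [IsFreeGroup H]

theorem subsingleton_generators_of_derivedSeries_two_eq_bot (h : derivedSeries H 2 = ⊥) :
    Subsingleton (Generators H) := by
  classical
  refine ⟨fun s t => by_contra fun hst => ?_⟩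
  let φ : H →* FreeGroup Bool := lift fun x => FreeGroup.of (decide (x = t))
  have hw :=
    commutatorElement_commutatorElement_mem_derivedSeries_two (of s) (of t) (of s) (of t * of t)
  rw [h, Subgroup.mem_bot] at hw
  apply_fun φ at hw
  simp only [map_commutatorElement, map_mul, map_one, φ, lift_of, decide_eq_false hst,
    decide_true] at hw
  revert hw
  decide

theorem commute_of_forall_commute_of {z : H} (hz : ∀ a, Commute z (of a)) (y : H) :
    Commute z y := by
  have h : (MulAut.conj z).toMonoidHom = .id H :=
    ext_hom fun a => by simp [(hz a).mul_inv_cancel]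
  exact mul_inv_eq_iff_eq_mul.mp (DFunLike.congr_fun h y)

theorem commute_of_subsingleton_generators [Subsingleton (Generators H)] (x y : H) :
    Commute x y :=
  commute_of_forall_commute_of (fun a => (commute_of_forall_commute_of (fun b => by
    rw [Subsingleton.elim a b]) x).symm) y

end IsFreeGroup

theorem commute_of_residuallyFree_of_derivedSeries_two_eq_bot {G F : Type*} [Group G] [Group F]
    [IsFreeGroup F] (hRF : ∀ g : G, g ≠ 1 → ∃ f : G →* F, f g ≠ 1)
    (h2 : derivedSeries G 2 = ⊥) (x y : G) : Commute x y := by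
  by_contra hxy
  obtain ⟨f, hf⟩ := hRF ⁅x, y⁆ (mt commutatorElement_eq_one_iff_commute.mp hxy)
  have hrange : derivedSeries f.range 2 = ⊥ := by
    rw [← map_derivedSeries_eq f.rangeRestrict_surjective, h2, Subgroup.map_bot]
  have := IsFreeGroup.subsingleton_generators_of_derivedSeries_two_eq_bot hrange
  apply hf
  rw [map_commutatorElement, commutatorElement_eq_one_iff_commute]
  exact congrArg Subtype.val
    (IsFreeGroup.commute_of_subsingleton_generators (f.rangeRestrict x) (f.rangeRestrict y))

def MonoidHom.mulEquivKerProdOfRightInverse {G H : Type*} [CommGroup G] [Group H] (φ : G →* H)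
    (σ : H →* G) (hσ : Function.RightInverse σ φ) : G ≃* φ.ker × H where
  toFun x := (⟨x * (σ (φ x))⁻¹, by simp [hσ _]⟩, φ x)
  invFun p := p.1 * σ p.2
  left_inv x := by simp
  right_inv p := by ext <;> simp [hσ _, φ.mem_ker.mp p.1.2]
  map_mul' x y := by
    ext
    · simp only [map_mul, mul_inv]
      exact mul_mul_mul_comm _ _ _ _
    · exact map_mul φ x y

theorem QuotientGroup.nonempty_mulEquiv_prod_int {G : Type*} [CommGroup G] (A : Subgroup G)
    (e : G ⧸ A ≃* Multiplicative ℤ) : Nonempty (G ≃* A × Multiplicative ℤ) := by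
  let φ : G →* Multiplicative ℤ := e.toMonoidHom.comp (QuotientGroup.mk' A)
  have hker : φ.ker = A := by ext x; simp [φ]
  obtain ⟨g, hg⟩ := (e.surjective.comp (QuotientGroup.mk'_surjective A)) (.ofAdd 1)
  have hσ : Function.RightInverse (zpowersHom G g) φ := fun n => by
    simp [show φ g = _ from hg, ← ofAdd_zsmul]
  exact ⟨(φ.mulEquivKerProdOfRightInverse _ hσ).trans
    ((MulEquiv.subgroupCongr hker).prodCongr (MulEquiv.refl _))⟩

/-- A residually free group which is an extension of `ℤ` by `ℤ²` is abelian, and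
hence isomorphic to `ℤ³`. -/
theorem residually_free_torus_bundle_group (G : Type*) [Group G]
    (hRF : ∀ g : G, g ≠ 1 → ∃ f : G →* FreeGroup (Fin 2), f g ≠ 1)
    (A : Subgroup G) [A.Normal]
    (hA : Nonempty (A ≃* Multiplicative (ℤ × ℤ)))
    (hQ : Nonempty ((G ⧸ A) ≃* Multiplicative ℤ)) :
    (∀ x y : G, x * y = y * x) ∧ Nonempty (G ≃* Multiplicative (ℤ × ℤ × ℤ)) := by
  obtain ⟨eA⟩ := hA
  obtain ⟨eQ⟩ := hQ
  have hA_comm : ∀ a ∈ A, ∀ b ∈ A, a * b = b * a := fun a ha b hb =>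
    congrArg Subtype.val (eA.injective (by rw [map_mul, map_mul, mul_comm]) :
      (⟨a, ha⟩ * ⟨b, hb⟩ : A) = ⟨b, hb⟩ * ⟨a, ha⟩)
  have hGA : commutator G ≤ A := by
    simpa using
      Abelianization.commutator_subset_ker (eQ.toMonoidHom.comp (QuotientGroup.mk' A))
  have hG_comm : ∀ x y : G, x * y = y * x :=
    commute_of_residuallyFree_of_derivedSeries_two_eq_bot hRF
      (derivedSeries_two_eq_bot_of_commutator_le hGA hA_comm)
  let _ : CommGroup G := { ‹Group G› with mul_comm := hG_comm }
  obtain ⟨e⟩ := QuotientGroup.nonempty_mulEquiv_prod_int A eQ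
  exact ⟨hG_comm, ⟨e.trans <| (MulEquiv.prodComm).trans <|
    ((MulEquiv.refl _).prodCongr eA).trans (MulEquiv.prodMultiplicative ℤ (ℤ × ℤ)).symm⟩⟩
end

section
/- Let G be a group with presentation ⟨a1, b1, ..., ag, bg, z | [a1,b1]···[ag,bg] = z^e, z central⟩ with e ≠ 0 (the fundamental group of a non-trivial circle bundle of Euler number e over a closed orientable surface of genus g). Then every homomorphism from G to a free group kills z, and hence if g ≥ 1 and G is non-abelian, G is not residually free. -/
open scoped commutatorElement

namespace FreeGroup

variable {α : Type*}

/-- Were `q.1 ≠ a`, the word of `a c` would be `a :: q :: t`, of length `|c| + 1`, while that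
of `c a` is a sublist of `q :: t ++ [a]`; so the two coincide and their first letters `a = q`. -/
theorem fst_eq_of_commute_of_toWord_eq_cons [DecidableEq α] {a : α} {c : FreeGroup α}
    (h : Commute (of a) c) {q : α × Bool} {t : List (α × Bool)} (hc : c.toWord = q :: t) :
    q.1 = a := by
  by_contra hqa
  have hreduced : IsReduced ((a, true) :: q :: t) :=
    List.isChain_cons_cons.2 ⟨fun h => absurd h.symm hqa, hc ▸ isReduced_toWord⟩
  have hleft : (of a * c).toWord = (a, true) :: q :: t := by
    rw [toWord_mul, toWord_of, hc]
    exact hreduced.reduce_eq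
  have hsub : List.Sublist (of a * c).toWord (q :: t ++ [(a, true)]) := by
    rw [h.eq, ← hc, ← toWord_of]
    exact toWord_mul_sublist c (of a)
  have heq := hsub.eq_of_length (by simp [hleft])
  rw [hleft, List.cons_append, List.cons.injEq] at heq
  exact hqa (congrArg Prod.fst heq.1).symm

theorem eq_one_of_commute_of_ne {x y : α} (hxy : x ≠ y) {c : FreeGroup α}
    (hx : Commute (of x) c) (hy : Commute (of y) c) : c = 1 := by
  classical
  rcases hc : c.toWord with _ | ⟨q, t⟩
  · exact toWord_eq_nil_iff.1 hc
  · exact absurd ((fst_eq_of_commute_of_toWord_eq_cons hx hc).symm.trans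
      (fst_eq_of_commute_of_toWord_eq_cons hy hc)) hxy

theorem commute_of_subsingleton_s19 [Subsingleton α] (u v : FreeGroup α) : Commute u v := by
  have hgen : Subgroup.closure (Set.range (of : α → FreeGroup α)) = ⊤ := closure_range_of α
  have hcomm : ∀ x ∈ Set.range (of : α → FreeGroup α), ∀ y ∈ Set.range of, x * y = y * x := by
    rintro _ ⟨x, rfl⟩ _ ⟨y, rfl⟩
    rw [Subsingleton.elim x y]
  have hle := Subgroup.closure_le_centralizer_centralizer (Set.range (of : α → FreeGroup α))
  rw [hgen] at hle
  exact Set.centralizer_centralizer_comm_of_comm hcomm u (hle trivial) v (hle trivial)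

theorem commute_of_ne_one_mem_center {c : FreeGroup α} (hc : c ≠ 1)
    (hcen : c ∈ Subgroup.center (FreeGroup α)) (u v : FreeGroup α) : Commute u v := by
  by_cases hα : Subsingleton α
  · exact commute_of_subsingleton_s19 u v
  · obtain ⟨x, y, hxy⟩ := not_subsingleton_iff_nontrivial.1 hα
    have hcomm (g : FreeGroup α) : Commute g c := Subgroup.mem_center_iff.1 hcen g
    exact absurd (eq_one_of_commute_of_ne hxy (hcomm _) (hcomm _)) hc

end FreeGroup

namespace IsFreeGroup

variable {H : Type*} [Group H] [IsFreeGroup H]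

theorem commute_of_ne_one_mem_center {c : H} (hc : c ≠ 1) (hcen : c ∈ Subgroup.center H)
    (u v : H) : Commute u v := by
  let φ := toFreeGroup H
  have hφc : φ c ∈ Subgroup.center (FreeGroup (Generators H)) :=
    Subgroup.mem_center_iff.2 fun g => by
      simpa using congrArg φ (Subgroup.mem_center_iff.1 hcen (φ.symm g))
  simpa using (FreeGroup.commute_of_ne_one_mem_center (by simpa using hc) hφc (φ u) (φ v)).map
    φ.symm.toMonoidHom

/-- Commutation is transitive on the nontrivial elements of a free group: the centralizer of
`c ≠ 1` is free (Nielsen–Schreier) with `c` in its centre, hence abelian. -/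
theorem commute_of_commute_of_ne_one {c u v : H} (hc : c ≠ 1) (hu : Commute u c)
    (hv : Commute v c) : Commute u v := by
  let K := Subgroup.centralizer ({c} : Set H)
  have hcK : c ∈ K := Subgroup.mem_centralizer_singleton_iff.2 rfl
  have hcen : (⟨c, hcK⟩ : K) ∈ Subgroup.center K :=
    Subgroup.mem_center_iff.2 fun k => Subtype.ext (Subgroup.mem_centralizer_singleton_iff.1 k.2)
  have := commute_of_ne_one_mem_center (by simpa using hc) hcen
    ⟨u, Subgroup.mem_centralizer_singleton_iff.2 hu.eq⟩
    ⟨v, Subgroup.mem_centralizer_singleton_iff.2 hv.eq⟩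
  exact congrArg Subtype.val this

end IsFreeGroup

/-- If `f z ≠ 1`, all `f (a i)`, `f (b i)` commute with it, hence pairwise, so `f z ^ e = 1`;
free groups are torsion-free. -/
theorem map_eq_one_of_prod_commutatorElement_eq_zpow {G α : Type*} [Group G]
    (f : G →* FreeGroup α) {g : ℕ} (a b : Fin g → G) {z : G} (hz : z ∈ Subgroup.center G)
    {e : ℤ} (he : e ≠ 0) (hrel : (List.ofFn fun i : Fin g => ⁅a i, b i⁆).prod = z ^ e) :
    f z = 1 := by
  by_contra hfz
  have hcomm (x : G) : Commute (f x) (f z) := Commute.map (Subgroup.mem_center_iff.1 hz x) f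
  have hab (i : Fin g) : f ⁅a i, b i⁆ = 1 := by
    rw [map_commutatorElement, commutatorElement_eq_one_iff_commute]
    exact IsFreeGroup.commute_of_commute_of_ne_one hfz (hcomm _) (hcomm _)
  have hpow : f z ^ e = 1 := by
    rw [← map_zpow, ← hrel, map_list_prod, List.map_ofFn]
    exact List.prod_eq_one fun x hx => by
      obtain ⟨i, rfl⟩ := List.mem_ofFn.1 hx
      exact hab i
  exact hfz ((IsMulTorsionFree.zpow_eq_one_iff_left he).1 hpow)

theorem nontrivial_circle_bundle_not_residually_free_general (G : Type*) [Group G]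
    (g : ℕ) (a b : Fin g → G) (z : G) (e : ℤ) (he : e ≠ 0) (hz : z ≠ 1)
    (hcentral : z ∈ Subgroup.center G)
    (hrel : (List.ofFn fun i : Fin g => ⁅a i, b i⁆).prod = z ^ e) :
    (∀ (α : Type) (f : G →* FreeGroup α), f z = 1) ∧
      (1 ≤ g → (∃ x y : G, ¬ Commute x y) →
        ¬ ∀ w : G, w ≠ 1 → ∃ (α : Type) (f : G →* FreeGroup α), f w ≠ 1) := by
  have hkill (α : Type) (f : G →* FreeGroup α) : f z = 1 :=
    map_eq_one_of_prod_commutatorElement_eq_zpow f a b hcentral he hrel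
  refine ⟨hkill, fun _ _ hresidual => ?_⟩
  obtain ⟨α, f, hfz⟩ := hresidual z hz
  exact hfz (hkill α f)

/-- Let `G` be the fundamental group of a non-trivial circle bundle of Euler
number `e ≠ 0` over a closed orientable surface of genus `g`: it is generated by
`a₁, b₁, …, a_g, b_g, z` with `z` central, `z ≠ 1`, and
`[a₁,b₁]⋯[a_g,b_g] = z^e`.  Then every homomorphism from `G` to a free group
kills `z`; hence if `g ≥ 1` and `G` is non-abelian, `G` is not residually free. -/
theorem nontrivial_circle_bundle_not_residually_free (G : Type*) [Group G]
    (g : ℕ) (a b : Fin g → G) (z : G) (e : ℤ) (he : e ≠ 0) (hz : z ≠ 1)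
    (hcentral : z ∈ Subgroup.center G)
    (hgen : Subgroup.closure (Set.range a ∪ Set.range b ∪ {z}) = ⊤)
    (hrel : (List.ofFn fun i : Fin g => ⁅a i, b i⁆).prod = z ^ e) :
    (∀ (α : Type) (f : G →* FreeGroup α), f z = 1) ∧
      (1 ≤ g → (∃ x y : G, ¬ Commute x y) →
        ¬ ∀ w : G, w ≠ 1 → ∃ (α : Type) (f : G →* FreeGroup α), f w ≠ 1) :=
  nontrivial_circle_bundle_not_residually_free_general G g a b z e he hz hcentral hrel
end
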